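/- Rainwater–Simons theorem for almost convergence: let B be an (I)-generating subset of B_{X*}, (x_n) a bounded sequence in a real Banach space X, and x ∈ X such that for every x* ∈ B the sequence (x*(x_n)) is almost convergent to x*(x) (i.e., (1/n)∑_{k=1}^n x*(x_{k+l}) → x*(x) uniformly in l). Then (x*(x_n)) is almost convergent to x*(x) for every x* ∈ X*. -/

import Mathlib

open Filter NormedSpace

/-- The weak*-closed convex hull of a set of functionals. -/
noncomputable def wstarClConvHull {X : Type*} [NormedAddCommGroup X] [NormedSpace ℝ X]
    (S : Set (StrongDual ℝ X)) : Set (StrongDual ℝ X) :=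
  ⇑StrongDual.toWeakDual ⁻¹' closure (convexHull ℝ (⇑StrongDual.toWeakDual '' S))

/-- `B` (I)-generates `K` if, whenever `B` is written as a countable union
`B = ⋃ₙ Bₙ`, `K` is the norm-closed convex hull of the union of the
weak*-closed convex hulls of the `Bₙ`. -/
def IGenerates {X : Type*} [NormedAddCommGroup X] [NormedSpace ℝ X]
    (B K : Set (StrongDual ℝ X)) : Prop :=
  ∀ Bn : ℕ → Set (StrongDual ℝ X), B = ⋃ n, Bn n →
    K = closure (convexHull ℝ (⋃ n, wstarClConvHull (Bn n)))

/-- A real sequence is almost convergent to `t` if its shifted Cesàro means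
converge to `t` uniformly in the shift (Lorentz's characterization). -/
def AlmostConvergentTo (s : ℕ → ℝ) (t : ℝ) : Prop :=
  TendstoUniformly
    (fun (n : ℕ) (l : ℕ) => (1 / (n : ℝ)) * ∑ k ∈ Finset.Icc 1 n, s (k + l))
    (fun _ => t) atTop

/-! Fix `ε > 0`. The functionals whose shifted Cesàro means are `ε`-close to `f z` for all
lengths `n ≥ N` and all shifts form a weak*-closed convex set `D_N`, increasing in `N`. The
hypothesis gives `B ⊆ ⋃ N, D_N`, so (I)-generation applied to the pieces `B ∩ D_N` puts the dual
unit ball inside the norm closure of the convex set `⋃ N, D_N`. As `(x_n)` is bounded, the Cesàro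
defects are Lipschitz in the functional uniformly in `n` and the shift, so this closure lies in
the corresponding union for any larger `ε`. Scaling passes from the unit ball to all of `X*`. -/

noncomputable def cesaroMean (s : ℕ → ℝ) (n l : ℕ) : ℝ :=
  (1 / (n : ℝ)) * ∑ k ∈ Finset.Icc 1 n, s (k + l)

theorem abs_cesaroMean_le {s : ℕ → ℝ} {C : ℝ} (hs : ∀ k, |s k| ≤ C) (n l : ℕ) :
    |cesaroMean s n l| ≤ C := by
  have hC : 0 ≤ C := (abs_nonneg _).trans (hs 0)
  rcases Nat.eq_zero_or_pos n with rfl | hn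
  · simpa [cesaroMean] using hC
  have hsum : |∑ k ∈ Finset.Icc 1 n, s (k + l)| ≤ n * C := by
    calc |∑ k ∈ Finset.Icc 1 n, s (k + l)| ≤ ∑ k ∈ Finset.Icc 1 n, |s (k + l)| :=
          Finset.abs_sum_le_sum_abs _ _
      _ ≤ ∑ _k ∈ Finset.Icc 1 n, C := Finset.sum_le_sum fun k _ => hs _
      _ = n * C := by simp
  rw [cesaroMean, abs_mul, abs_of_nonneg (by positivity), one_div,
    inv_mul_le_iff₀ (by positivity)]
  exact hsum

theorem almostConvergentTo_iff {s : ℕ → ℝ} {t : ℝ} :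
    AlmostConvergentTo s t ↔ ∀ ε > 0, ∃ N, ∀ n ≥ N, ∀ l, |cesaroMean s n l - t| ≤ ε := by
  rw [AlmostConvergentTo, Metric.tendstoUniformly_iff]
  simp only [eventually_atTop, Real.dist_eq, abs_sub_comm t]
  refine ⟨fun h ε hε => ?_, fun h ε hε => ?_⟩
  · obtain ⟨N, hN⟩ := h ε hε
    exact ⟨N, fun n hn l => (hN n hn l).le⟩
  · obtain ⟨N, hN⟩ := h (ε / 2) (half_pos hε)
    exact ⟨N, fun n hn l => (hN n hn l).trans_lt (half_lt_self hε)⟩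

section CesaroDefect

variable {X : Type*} [NormedAddCommGroup X] [NormedSpace ℝ X] (x : ℕ → X) (z : X)

noncomputable def cesaroDefect (n l : ℕ) : StrongDual ℝ X →ₗ[ℝ] ℝ where
  toFun f := cesaroMean (fun k => f (x k)) n l - f z
  map_add' f g := by
    simp only [cesaroMean, add_apply, Finset.sum_add_distrib]
    ring
  map_smul' c f := by
    simp only [cesaroMean, smul_apply, smul_eq_mul, ← Finset.mul_sum, RingHom.id_apply]
    ring

theorem abs_cesaroDefect_le {R : ℝ} (hR : ∀ k, ‖x k‖ ≤ R) (f : StrongDual ℝ X) (n l : ℕ) :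
    |cesaroDefect x z n l f| ≤ (R + ‖z‖) * ‖f‖ := by
  have hmean : |cesaroMean (fun k => f (x k)) n l| ≤ R * ‖f‖ :=
    abs_cesaroMean_le (fun k => (f.le_opNorm (x k)).trans <| by
      rw [mul_comm]
      exact mul_le_mul_of_nonneg_right (hR k) (norm_nonneg f)) n l
  calc |cesaroDefect x z n l f| ≤ |cesaroMean (fun k => f (x k)) n l| + |f z| := abs_sub _ _
    _ ≤ R * ‖f‖ + ‖z‖ * ‖f‖ := by
        gcongr
        rw [mul_comm]
        exact f.le_opNorm z
    _ = (R + ‖z‖) * ‖f‖ := by ring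

theorem continuous_cesaroDefect_toStrongDual (n l : ℕ) :
    Continuous fun g : WeakDual ℝ X => cesaroDefect x z n l (WeakDual.toStrongDual g) :=
  (continuous_const.mul (continuous_finsetSum _ fun _ _ => WeakDual.eval_continuous _)).sub
    (WeakDual.eval_continuous z)

def cesaroWithin (ε : ℝ) (N : ℕ) : Set (StrongDual ℝ X) :=
  ⋂ n ≥ N, ⋂ l, cesaroDefect x z n l ⁻¹' Metric.closedBall 0 ε

theorem mem_cesaroWithin {ε : ℝ} {N : ℕ} {f : StrongDual ℝ X} :
    f ∈ cesaroWithin x z ε N ↔ ∀ n ≥ N, ∀ l, |cesaroDefect x z n l f| ≤ ε := by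
  simp [cesaroWithin, Real.norm_eq_abs]

theorem cesaroWithin_mono (ε : ℝ) : Monotone (cesaroWithin x z ε) := by
  intro N N' hNN' f hf
  rw [mem_cesaroWithin] at hf ⊢
  exact fun n hn => hf n (hNN'.trans hn)

theorem convex_cesaroWithin (ε : ℝ) (N : ℕ) : Convex ℝ (cesaroWithin x z ε N) :=
  convex_iInter₂ fun n _ => convex_iInter fun l =>
    (convex_closedBall 0 ε).linear_preimage (cesaroDefect x z n l)

theorem isClosed_toWeakDual_image_cesaroWithin (ε : ℝ) (N : ℕ) :
    IsClosed (StrongDual.toWeakDual '' cesaroWithin x z ε N) := by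
  rw [LinearEquiv.image_eq_preimage_symm]
  simp only [cesaroWithin, Set.preimage_iInter]
  exact isClosed_iInter fun n => isClosed_iInter fun _ => isClosed_iInter fun l =>
    Metric.isClosed_closedBall.preimage (continuous_cesaroDefect_toStrongDual x z n l)

theorem smul_mem_cesaroWithin {ε : ℝ} {N : ℕ} {f : StrongDual ℝ X} (c : ℝ)
    (hf : f ∈ cesaroWithin x z ε N) : c • f ∈ cesaroWithin x z (|c| * ε) N := by
  rw [mem_cesaroWithin] at hf ⊢
  intro n hn l
  rw [map_smul, smul_eq_mul, abs_mul]
  gcongr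
  exact hf n hn l

theorem closure_iUnion_cesaroWithin_subset {R : ℝ} (hR : ∀ k, ‖x k‖ ≤ R) {ε ε' : ℝ}
    (hεε' : ε < ε') : closure (⋃ N, cesaroWithin x z ε N) ⊆ ⋃ N, cesaroWithin x z ε' N := by
  intro f hf
  have hM : 0 < R + ‖z‖ + 1 := by
    have := (norm_nonneg _).trans (hR 0)
    positivity
  obtain ⟨g, hg, hfg⟩ :=
    Metric.mem_closure_iff.1 hf ((ε' - ε) / (R + ‖z‖ + 1)) (div_pos (sub_pos.2 hεε') hM)
  obtain ⟨N, hgN⟩ := Set.mem_iUnion.1 hg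
  refine Set.mem_iUnion.2 ⟨N, (mem_cesaroWithin x z).2 fun n hn l => ?_⟩
  have hclose : |cesaroDefect x z n l (f - g)| ≤ ε' - ε :=
    calc |cesaroDefect x z n l (f - g)|
        ≤ (R + ‖z‖) * ‖f - g‖ := abs_cesaroDefect_le x z hR _ n l
      _ ≤ (R + ‖z‖ + 1) * ((ε' - ε) / (R + ‖z‖ + 1)) := by
          rw [← dist_eq_norm]
          exact mul_le_mul (by linarith) hfg.le dist_nonneg hM.le
      _ = ε' - ε := mul_div_cancel₀ _ hM.ne'
  rw [map_sub] at hclose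
  linarith [(mem_cesaroWithin x z).1 hgN n hn l,
    abs_sub_abs_le_abs_sub (cesaroDefect x z n l f) (cesaroDefect x z n l g)]

theorem mem_iUnion_cesaroWithin_of_closedBall_subset
    (hball : ∀ ε > 0, Metric.closedBall 0 1 ⊆ ⋃ N, cesaroWithin x z ε N)
    (f : StrongDual ℝ X) {ε : ℝ} (hε : 0 < ε) : f ∈ ⋃ N, cesaroWithin x z ε N := by
  have hc : 0 < ‖f‖ + 1 := by positivity
  have hf : (‖f‖ + 1)⁻¹ • f ∈ Metric.closedBall 0 1 := by
    rw [mem_closedBall_zero_iff, norm_smul, norm_inv, Real.norm_of_nonneg hc.le,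
      inv_mul_le_iff₀ hc]
    linarith
  obtain ⟨N, hN⟩ := Set.mem_iUnion.1 (hball (ε / (‖f‖ + 1)) (by positivity) hf)
  have := smul_mem_cesaroWithin x z (‖f‖ + 1) hN
  rw [smul_smul, mul_inv_cancel₀ hc.ne', one_smul, abs_of_pos hc, mul_div_cancel₀ _ hc.ne']
    at this
  exact Set.mem_iUnion.2 ⟨N, this⟩

theorem almostConvergentTo_iff_forall_mem_iUnion_cesaroWithin {f : StrongDual ℝ X} :
    AlmostConvergentTo (fun n => f (x n)) (f z) ↔ ∀ ε > 0, f ∈ ⋃ N, cesaroWithin x z ε N := by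
  simp only [almostConvergentTo_iff, Set.mem_iUnion, mem_cesaroWithin]
  rfl

end CesaroDefect

section IGenerates

variable {X : Type*} [NormedAddCommGroup X] [NormedSpace ℝ X]

theorem wstarClConvHull_subset {S D : Set (StrongDual ℝ X)} (hSD : S ⊆ D) (hD : Convex ℝ D)
    (hDc : IsClosed (StrongDual.toWeakDual '' D)) : wstarClConvHull S ⊆ D := fun _ hf =>
  StrongDual.toWeakDual.injective.mem_set_image.1 <|
    closure_minimal (convexHull_min (Set.image_mono hSD) (hD.linear_image _)) hDc hf

theorem IGenerates.subset_closure_iUnion {B K : Set (StrongDual ℝ X)} (hI : IGenerates B K)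
    {D : ℕ → Set (StrongDual ℝ X)} (hB : B ⊆ ⋃ N, D N) (hmono : Monotone D)
    (hconv : ∀ N, Convex ℝ (D N)) (hclosed : ∀ N, IsClosed (StrongDual.toWeakDual '' D N)) :
    K ⊆ closure (⋃ N, D N) := by
  rw [hI (fun N => B ∩ D N) (by rw [← Set.inter_iUnion, Set.inter_eq_left.2 hB])]
  exact closure_mono <| convexHull_min
    (Set.iUnion_mono fun N => wstarClConvHull_subset Set.inter_subset_right (hconv N) (hclosed N))
    (hmono.directed_le.convex_iUnion fun N => hconv N)

end IGenerates

theorem rainwater_simons_almost_convergence_general {X : Type*} [NormedAddCommGroup X]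
    [NormedSpace ℝ X]
    (B : Set (StrongDual ℝ X))
    (hI : IGenerates B (Metric.closedBall (0 : StrongDual ℝ X) 1))
    (x : ℕ → X) (R : ℝ) (hR : ∀ n, ‖x n‖ ≤ R) (z : X)
    (h : ∀ f ∈ B, AlmostConvergentTo (fun n => f (x n)) (f z)) :
    ∀ f : StrongDual ℝ X, AlmostConvergentTo (fun n => f (x n)) (f z) := by
  have hball : ∀ ε > 0, Metric.closedBall 0 1 ⊆ ⋃ N, cesaroWithin x z ε N := fun ε hε =>
    (hI.subset_closure_iUnion
        (fun f hf => (almostConvergentTo_iff_forall_mem_iUnion_cesaroWithin x z).1 (h f hf) _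
          (half_pos hε))
        (cesaroWithin_mono x z _) (convex_cesaroWithin x z _)
        (isClosed_toWeakDual_image_cesaroWithin x z _)).trans
      (closure_iUnion_cesaroWithin_subset x z hR (half_lt_self hε))
  intro f
  rw [almostConvergentTo_iff_forall_mem_iUnion_cesaroWithin]
  exact fun ε hε => mem_iUnion_cesaroWithin_of_closedBall_subset x z hball f hε

/-- Rainwater–Simons theorem for almost convergence: if `B` (I)-generates the
dual unit ball and `(f(x_n))ₙ` is almost convergent to `f(z)` for every `f ∈ B`,
then the same holds for every `f ∈ X*`. -/
theorem rainwater_simons_almost_convergence {X : Type*} [NormedAddCommGroup X]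
    [NormedSpace ℝ X] [CompleteSpace X]
    (B : Set (StrongDual ℝ X)) (hB1 : B ⊆ Metric.closedBall (0 : StrongDual ℝ X) 1)
    (hI : IGenerates B (Metric.closedBall (0 : StrongDual ℝ X) 1))
    (x : ℕ → X) (R : ℝ) (hR : ∀ n, ‖x n‖ ≤ R) (z : X)
    (h : ∀ f ∈ B, AlmostConvergentTo (fun n => f (x n)) (f z)) :
    ∀ f : StrongDual ℝ X, AlmostConvergentTo (fun n => f (x n)) (f z) :=
  rainwater_simons_almost_convergence_general B hI x R hR z h
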